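/- Let Φ(A) = Σ_k V_k* A V_k be a unital map on n×n complex matrices (Σ_k V_k* V_k = I). If A commutes with V_j V_k* for all indices j,k, then Φ(A*A) = Φ(A)*Φ(A) and Φ(AA*) = Φ(A)Φ(A)*, i.e. A lies in the multiplicative domain of Φ. -/

import Mathlib

/-!
For `Φ(A) = ∑ₖ Vₖ* A Vₖ`, expanding a product of two values gives
`Vⱼ* A Vⱼ Vₖ* B Vₖ`; if `A` commutes with `Vⱼ Vₖ*` this is `Vⱼ* Vⱼ · Vₖ* A B Vₖ`, so
`Φ(A) Φ(B) = Φ(1) Φ(AB) = Φ(AB)` for unital `Φ`. The family `Vⱼ Vₖ*` is closed under `*`,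
so `A*` commutes with it as well, and `Φ(A)* = Φ(A*)` gives both identities.
-/

open Matrix Finset

section KrausMap

variable {R ι : Type*} [Semiring R] [StarRing R]

theorem commute_star_of_forall_commute {V : ι → R} {A : R}
    (hA : ∀ j k, Commute A (V j * star (V k))) (j k : ι) :
    Commute (star A) (V j * star (V k)) := by
  simpa only [star_mul, star_star] using (hA k j).star_star

variable [Fintype ι]

def krausMap (V : ι → R) (A : R) : R :=
  ∑ k, star (V k) * A * V k

theorem krausMap_one (V : ι → R) : krausMap V 1 = ∑ k, star (V k) * V k := by
  simp only [krausMap, mul_one]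

theorem star_krausMap (V : ι → R) (A : R) : star (krausMap V A) = krausMap V (star A) := by
  simp only [krausMap, star_sum, star_mul, star_star, mul_assoc]

variable {V : ι → R} {A : R}

theorem krausMap_mul_krausMap (hA : ∀ j k, Commute A (V j * star (V k)))
    (B : R) : krausMap V A * krausMap V B = krausMap V 1 * krausMap V (A * B) := by
  have hterm : ∀ j k, (star (V j) * A * V j) * (star (V k) * B * V k)
      = (star (V j) * 1 * V j) * (star (V k) * (A * B) * V k) := fun j k => by
    calc (star (V j) * A * V j) * (star (V k) * B * V k)
        = star (V j) * (A * (V j * star (V k))) * (B * V k) := by noncomm_ring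
      _ = star (V j) * ((V j * star (V k)) * A) * (B * V k) := by rw [(hA j k).eq]
      _ = (star (V j) * 1 * V j) * (star (V k) * (A * B) * V k) := by noncomm_ring
  simp only [krausMap, sum_mul_sum, hterm]

theorem krausMap_mul_of_forall_commute (hV : krausMap V 1 = 1)
    (hA : ∀ j k, Commute A (V j * star (V k))) (B : R) :
    krausMap V (A * B) = krausMap V A * krausMap V B := by
  rw [krausMap_mul_krausMap hA, hV, one_mul]

theorem krausMap_star_mul_self (hV : krausMap V 1 = 1)
    (hA : ∀ j k, Commute A (V j * star (V k))) :
    krausMap V (star A * A) = star (krausMap V A) * krausMap V A := by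
  rw [star_krausMap, krausMap_mul_of_forall_commute hV (commute_star_of_forall_commute hA)]

theorem krausMap_mul_star_self (hV : krausMap V 1 = 1)
    (hA : ∀ j k, Commute A (V j * star (V k))) :
    krausMap V (A * star A) = krausMap V A * star (krausMap V A) := by
  rw [star_krausMap, krausMap_mul_of_forall_commute hV hA]

end KrausMap

theorem stmt_2 {n m : ℕ} (V : Fin m → Matrix (Fin n) (Fin n) ℂ)
    (hV : ∑ k, (V k)ᴴ * V k = 1)
    (A : Matrix (Fin n) (Fin n) ℂ)
    (hcomm : ∀ j k, A * (V j * (V k)ᴴ) = (V j * (V k)ᴴ) * A) :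
    (∑ k, (V k)ᴴ * (Aᴴ * A) * V k)
      = (∑ k, (V k)ᴴ * A * V k)ᴴ * (∑ k, (V k)ᴴ * A * V k) ∧
    (∑ k, (V k)ᴴ * (A * Aᴴ) * V k)
      = (∑ k, (V k)ᴴ * A * V k) * (∑ k, (V k)ᴴ * A * V k)ᴴ := by
  simp only [← star_eq_conjTranspose] at hV hcomm ⊢
  have hunital : krausMap V 1 = 1 := by rwa [krausMap_one]
  exact ⟨krausMap_star_mul_self hunital hcomm, krausMap_mul_star_self hunital hcomm⟩
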